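/- Tail truncation bound for the heat-line integral: let q₀ satisfy sup_{x≥0} e^{δ' x}|q₀(x)| < ∞ with δ' > δ > 0, let x,t ≥ c > 0, set h = min(δ, x/(2t)) and L with e^{-L² t} = ε ∈ (0,1). Then the modulus of (L e^{-hx}/(2π)) ∫_{|a|>1} e^{i L a x - (L a + i h)² t} q̂₀(La + ih) da is at most ‖q̂₀(· + ih)‖_∞ · (L e^{-h² t}/(2π)) · ε/(-ln ε). -/

import Mathlib

/-!
On the line `Im k = h` the heat phase has modulus `e^{(h² - s²) t}`, so for `|a| > 1` the
integrand is dominated by `C e^{h² t} |a| e^{-L² t a²}`, whose integral over `|a| > 1` is exactly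
`C e^{h² t} ε / (L² t)`. Since `2 h t ≤ x`, the prefactor `e^{-h x}` turns `e^{h² t}` into
`e^{-h² t}`.
-/

open MeasureTheory Set Real

theorem integral_Ioi_mul_exp_neg_mul_sq {b : ℝ} (hb : 0 < b) (r : ℝ) :
    ∫ a in Ioi r, a * exp (-b * a ^ 2) = exp (-b * r ^ 2) / (2 * b) := by
  have hderiv : ∀ u ∈ Ici r,
      HasDerivAt (fun a ↦ -exp (-b * a ^ 2) / (2 * b)) (u * exp (-b * u ^ 2)) u := by
    intro u _
    refine ((((hasDerivAt_pow 2 u).const_mul (-b)).exp).neg).div_const (2 * b) |>.congr_deriv ?_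
    field_simp
    ring
  have hlim : Filter.Tendsto (fun a ↦ -exp (-b * a ^ 2) / (2 * b)) Filter.atTop (nhds 0) := by
    have hsq : Filter.Tendsto (fun a : ℝ ↦ -b * a ^ 2) Filter.atTop Filter.atBot :=
      (Filter.tendsto_pow_atTop two_ne_zero).const_mul_atTop_of_neg (neg_neg_of_pos hb)
    simpa using ((tendsto_exp_atBot.comp hsq).neg).div_const (2 * b)
  rw [integral_Ioi_of_hasDerivAt_of_tendsto' hderiv
    (integrable_mul_exp_neg_mul_sq hb).integrableOn hlim]
  ring

theorem integral_abs_gt_abs_mul_exp_neg_mul_sq {b r : ℝ} (hb : 0 < b) (hr : 0 ≤ r) :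
    ∫ a in {a : ℝ | r < |a|}, |a| * exp (-b * a ^ 2) = exp (-b * r ^ 2) / b := by
  have hset : {a : ℝ | r < |a|} = (fun a ↦ |a|) ⁻¹' Ioi r := rfl
  have hmeas : MeasurableSet (Ioi r) := measurableSet_Ioi
  calc ∫ a in {a : ℝ | r < |a|}, |a| * exp (-b * a ^ 2)
      = ∫ a, (Ioi r).indicator (fun u ↦ u * exp (-b * u ^ 2)) |a| := by
        rw [hset, ← integral_indicator (hmeas.preimage continuous_abs.measurable)]
        congr 1 with a
        simp [indicator, sq_abs]
    _ = 2 * ∫ u in Ioi r, u * exp (-b * u ^ 2) := by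
        rw [integral_comp_abs, setIntegral_indicator hmeas, Ioi_inter_Ioi, sup_eq_right.2 hr]
    _ = exp (-b * r ^ 2) / b := by
        rw [integral_Ioi_mul_exp_neg_mul_sq hb]
        field_simp

theorem norm_setIntegral_abs_gt_le {E : Type*} [NormedAddCommGroup E] [NormedSpace ℝ E]
    {F : ℝ → E} {K b r : ℝ} (hb : 0 < b) (hr : 0 ≤ r)
    (hF : ∀ a, r < |a| → ‖F a‖ ≤ K * (|a| * exp (-b * a ^ 2))) :
    ‖∫ a in {a : ℝ | r < |a|}, F a‖ ≤ K * (exp (-b * r ^ 2) / b) := by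
  have hopen : MeasurableSet {a : ℝ | r < |a|} :=
    (isOpen_lt continuous_const continuous_abs).measurableSet
  have hint : Integrable (fun a : ℝ ↦ |a| * exp (-b * a ^ 2)) := by
    simpa [abs_mul] using (integrable_mul_exp_neg_mul_sq hb).abs
  calc ‖∫ a in {a : ℝ | r < |a|}, F a‖
      ≤ ∫ a in {a : ℝ | r < |a|}, K * (|a| * exp (-b * a ^ 2)) :=
        norm_integral_le_of_norm_le (hint.const_mul K).integrableOn
          ((ae_restrict_iff' hopen).2 (Filter.Eventually.of_forall hF))
    _ = K * (exp (-b * r ^ 2) / b) := by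
        rw [integral_const_mul, integral_abs_gt_abs_mul_exp_neg_mul_sq hb hr]

theorem norm_cexp_heat_phase (s h x t : ℝ) :
    ‖Complex.exp (Complex.I * s * x - ((s : ℂ) + h * Complex.I) ^ 2 * t)‖
      = exp ((h ^ 2 - s ^ 2) * t) := by
  rw [Complex.norm_exp]
  congr 1
  simp only [Complex.sub_re, Complex.mul_re, Complex.I_re, Complex.I_im, Complex.ofReal_re,
    Complex.ofReal_im, sq, Complex.add_re, Complex.add_im, Complex.mul_im]
  ring

theorem exp_neg_mul_mul_exp_sq_mul_le {h x t : ℝ} (hh : 0 ≤ h) (hhx : h * (2 * t) ≤ x) :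
    exp (-h * x) * exp (h ^ 2 * t) ≤ exp (-h ^ 2 * t) := by
  rw [← exp_add, exp_le_exp]
  nlinarith [mul_le_mul_of_nonneg_left hhx hh]

theorem norm_heat_integrand_le {q : ℂ → ℂ} {L x t h C a : ℝ}
    (hq : ∀ s : ℝ, ‖q (s + h * Complex.I)‖ ≤ C) (ha : 1 ≤ |a|) :
    ‖Complex.exp (Complex.I * (L * a) * x - ((L * a : ℝ) + h * Complex.I) ^ 2 * t)
        * q ((L * a : ℝ) + h * Complex.I)‖
      ≤ C * exp (h ^ 2 * t) * (|a| * exp (-(L ^ 2 * t) * a ^ 2)) := by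
  have hC : 0 ≤ C := (norm_nonneg _).trans (hq 0)
  have hphase : exp ((h ^ 2 - (L * a) ^ 2) * t)
      ≤ exp (h ^ 2 * t) * (|a| * exp (-(L ^ 2 * t) * a ^ 2)) := by
    rw [show (h ^ 2 - (L * a) ^ 2) * t = h ^ 2 * t + -(L ^ 2 * t) * a ^ 2 by ring, exp_add]
    gcongr
    exact le_mul_of_one_le_left (exp_pos _).le ha
  rw [norm_mul, ← Complex.ofReal_mul, norm_cexp_heat_phase]
  calc exp ((h ^ 2 - (L * a) ^ 2) * t) * ‖q ((L * a : ℝ) + h * Complex.I)‖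
      ≤ exp (h ^ 2 * t) * (|a| * exp (-(L ^ 2 * t) * a ^ 2)) * C :=
        mul_le_mul hphase (hq _) (norm_nonneg _) (by positivity)
    _ = C * exp (h ^ 2 * t) * (|a| * exp (-(L ^ 2 * t) * a ^ 2)) := by ring

theorem stmt_17_general (qhat : ℂ → ℂ) (δ c x t ε L C : ℝ)
    (hδ : 0 < δ) (hc : 0 < c) (hx : c ≤ x) (ht : c ≤ t)
    (hL : 0 < L) (hLε : Real.exp (-L ^ 2 * t) = ε)
    (hC : ∀ a : ℝ, norm (qhat ((a : ℂ) + (min δ (x / (2 * t)) : ℝ) * Complex.I)) ≤ C) :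
    norm
        ((L * Real.exp (-(min δ (x / (2 * t))) * x) / (2 * Real.pi))
          * ∫ a in {a : ℝ | 1 < |a|},
              Complex.exp (Complex.I * (L * a) * x
                  - ((L * a : ℝ) + (min δ (x / (2 * t)) : ℝ) * Complex.I) ^ 2 * t)
                * qhat ((L * a : ℝ) + (min δ (x / (2 * t)) : ℝ) * Complex.I))
      ≤ C * (L * Real.exp (-(min δ (x / (2 * t))) ^ 2 * t) / (2 * Real.pi))
          * (ε / (-Real.log ε)) := by
  set h := min δ (x / (2 * t))
  have ht0 : 0 < t := hc.trans_le ht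
  have hx0 : 0 < x := hc.trans_le hx
  have hε0 : 0 < ε := hLε ▸ exp_pos _
  have hb : 0 < L ^ 2 * t := by positivity
  have hε : exp (-(L ^ 2 * t) * 1 ^ 2) = ε := by rw [← hLε]; ring_nf
  have hlog : -Real.log ε = L ^ 2 * t := by rw [← hLε, Real.log_exp]; ring
  have hC0 : 0 ≤ C := (norm_nonneg _).trans (hC 0)
  have htail := norm_setIntegral_abs_gt_le hb zero_le_one
    (fun a ha ↦ norm_heat_integrand_le (L := L) (x := x) (t := t) hC ha.le)
  have hshift : exp (-h * x) * exp (h ^ 2 * t) ≤ exp (-h ^ 2 * t) :=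
    exp_neg_mul_mul_exp_sq_mul_le (le_min hδ.le (by positivity))
      ((le_div_iff₀ (by positivity)).1 (min_le_right _ _))
  rw [hε] at htail
  rw [norm_mul, ← Complex.ofReal_ofNat, ← Complex.ofReal_mul, ← Complex.ofReal_mul,
    ← Complex.ofReal_div, Complex.norm_of_nonneg (by positivity), hlog]
  calc L * exp (-h * x) / (2 * π) * ‖_‖
      ≤ L * exp (-h * x) / (2 * π) * (C * exp (h ^ 2 * t) * (ε / (L ^ 2 * t))) := by gcongr
    _ = C * (L / (2 * π)) * (ε / (L ^ 2 * t)) * (exp (-h * x) * exp (h ^ 2 * t)) := by ring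
    _ ≤ C * (L / (2 * π)) * (ε / (L ^ 2 * t)) * exp (-h ^ 2 * t) := by gcongr
    _ = C * (L * exp (-h ^ 2 * t) / (2 * π)) * (ε / (L ^ 2 * t)) := by ring

/-- Tail truncation bound for the heat-line integral `I₁`: with `h = min(δ, x/(2t))`,
`e^{-L² t} = ε ∈ (0,1)` and `C` a bound for `|q̂₀|` on the line `Im k = h`, the tail
of the rescaled integral over `|a| > 1` is bounded by
`C · (L e^{-h² t}/(2π)) · ε/(-ln ε)`. -/
theorem stmt_17 (q₀ : ℝ → ℂ) (qhat : ℂ → ℂ) (δ δ' c x t ε L C : ℝ)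
    (hδ : 0 < δ) (hδ' : δ < δ') (hc : 0 < c) (hx : c ≤ x) (ht : c ≤ t)
    (hε0 : 0 < ε) (hε1 : ε < 1) (hL : 0 < L) (hLε : Real.exp (-L ^ 2 * t) = ε)
    (hmeas : Measurable q₀)
    (hdecay : ∃ M : ℝ, ∀ y : ℝ, 0 ≤ y → Real.exp (δ' * y) * norm (q₀ y) ≤ M)
    (hqhat : ∀ k : ℂ, qhat k = ∫ y in Set.Ici (0 : ℝ),
        Complex.exp (-Complex.I * k * y) * q₀ y)
    (hC : ∀ a : ℝ, norm (qhat ((a : ℂ) + (min δ (x / (2 * t)) : ℝ) * Complex.I)) ≤ C) :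
    norm
        ((L * Real.exp (-(min δ (x / (2 * t))) * x) / (2 * Real.pi))
          * ∫ a in {a : ℝ | 1 < |a|},
              Complex.exp (Complex.I * (L * a) * x
                  - ((L * a : ℝ) + (min δ (x / (2 * t)) : ℝ) * Complex.I) ^ 2 * t)
                * qhat ((L * a : ℝ) + (min δ (x / (2 * t)) : ℝ) * Complex.I))
      ≤ C * (L * Real.exp (-(min δ (x / (2 * t))) ^ 2 * t) / (2 * Real.pi))
          * (ε / (-Real.log ε)) :=
  stmt_17_general qhat δ c x t ε L C hδ hc hx ht hL hLε hC
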